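/- Under the setting of a counting process N with zero probability of explosion, interarrival process W, claim size process X, and aggregate claims process S_t = Σ_{k=1}^{N_t} X_k with natural filtration (F_t), the terminal σ-algebra F_∞ := σ(⋃_{t≥0} F_t) equals σ(⋃_{n} σ(W_1,…,W_n) ∪ ⋃_n σ(X_1,…,X_n)), the σ-algebra generated jointly by all interarrival times and all claim sizes. -/

import Mathlib

/-!
The path `t ↦ S t` is a step function: it equals `A n = X 0 + ⋯ + X (n - 1)` on
`[T n, T (n + 1))`. Since `{n ≤ N t} = {T n ≤ t}`, each `S t = A (N t)` is a measurable function
of the interarrival times and claim sizes. Conversely, positivity of the `W n` and `X n` makes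
`T` and `A` strictly increasing, so both can be read off `S` at rational times: `A (n + 1)` is the
least value of `S` above `A n`, and `T n` is the infimum of the rationals `q` with `A n ≤ S q`.
-/

open MeasureTheory ProbabilityTheory Set

theorem strictMono_sum_range_of_pos {M : Type*} [AddCommMonoid M] [Preorder M]
    [AddLeftStrictMono M] {f : ℕ → M} (hf : ∀ n, 0 < f n) :
    StrictMono fun n => ∑ k ∈ Finset.range n, f k :=
  strictMono_nat_of_lt_succ fun n => by
    simpa only [Finset.sum_range_succ] using lt_add_of_pos_right _ (hf n)

theorem Measurable.apply_index {Ω ι β : Type*} {m : MeasurableSpace Ω} [MeasurableSpace ι]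
    [Countable ι] [MeasurableSingletonClass ι] [MeasurableSpace β] {G : ι → Ω → β}
    (hG : ∀ i, Measurable (G i)) {f : Ω → ι} (hf : Measurable f) :
    Measurable fun ω => G (f ω) ω :=
  (measurable_from_prod_countable_right (f := fun p : ι × Ω => G p.1 p.2) hG).comp
    (hf.prodMk measurable_id)

section Counting

variable {T A : ℕ → ℝ} {N : ℝ → ℕ}

theorem le_count_iff (hT : StrictMono T) (hN : ∀ t, 0 ≤ t → T (N t) ≤ t ∧ t < T (N t + 1))
    {t : ℝ} (ht : 0 ≤ t) {n : ℕ} : n ≤ N t ↔ T n ≤ t :=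
  ⟨fun h => (hT.monotone h).trans (hN t ht).1,
    fun h => Nat.lt_succ_iff.mp (hT.lt_iff_lt.mp (h.trans_lt (hN t ht).2))⟩

theorem count_zero (hT : StrictMono T) (hN : ∀ t, 0 ≤ t → T (N t) ≤ t ∧ t < T (N t + 1))
    (hT0 : 0 ≤ T 0) : N 0 = 0 := by
  by_contra h
  have := (le_count_iff hT hN le_rfl).mp (Nat.one_le_iff_ne_zero.mpr h)
  linarith [hT Nat.zero_lt_one]

theorem exists_rat_count_eq (hT : StrictMono T)
    (hN : ∀ t, 0 ≤ t → T (N t) ≤ t ∧ t < T (N t + 1)) (hT0 : 0 ≤ T 0) (n : ℕ) :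
    ∃ q : ℚ, 0 ≤ (q : ℝ) ∧ N q = n := by
  obtain ⟨q, hnq, hqn⟩ := exists_rat_btwn (hT n.lt_succ_self)
  have hq : 0 ≤ (q : ℝ) := (hT0.trans (hT.monotone n.zero_le)).trans hnq.le
  refine ⟨q, hq, le_antisymm ?_ ((le_count_iff hT hN hq).mpr hnq.le)⟩
  exact Nat.lt_succ_iff.mp (lt_of_not_ge fun h => ((le_count_iff hT hN hq).mp h).not_gt hqn)

theorem lt_iff_exists_rat_le_count (hT : StrictMono T)
    (hN : ∀ t, 0 ≤ t → T (N t) ≤ t ∧ t < T (N t + 1)) (hT0 : 0 ≤ T 0) (n : ℕ) (c : ℝ) :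
    T n < c ↔ ∃ q : ℚ, 0 ≤ (q : ℝ) ∧ (q : ℝ) < c ∧ n ≤ N q := by
  constructor
  · intro h
    obtain ⟨q, hnq, hqc⟩ := exists_rat_btwn h
    have hq : 0 ≤ (q : ℝ) := (hT0.trans (hT.monotone n.zero_le)).trans hnq.le
    exact ⟨q, hq, hqc, (le_count_iff hT hN hq).mpr hnq.le⟩
  · rintro ⟨q, hq, hqc, hn⟩
    exact ((le_count_iff hT hN hq).mp hn).trans_lt hqc

theorem succ_lt_iff_exists_rat_lt_comp_count (hT : StrictMono T)
    (hN : ∀ t, 0 ≤ t → T (N t) ≤ t ∧ t < T (N t + 1)) (hT0 : 0 ≤ T 0) (hA : StrictMono A)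
    (n : ℕ) (c : ℝ) :
    A (n + 1) < c ↔ ∃ q : ℚ, 0 ≤ (q : ℝ) ∧ A n < A (N q) ∧ A (N q) < c := by
  constructor
  · intro h
    obtain ⟨q, hq, hqn⟩ := exists_rat_count_eq hT hN hT0 (n + 1)
    exact ⟨q, hq, hqn ▸ hA n.lt_succ_self, hqn ▸ h⟩
  · rintro ⟨q, -, hnq, hqc⟩
    exact (hA.monotone (Nat.succ_le_of_lt (hA.lt_iff_lt.mp hnq))).trans_lt hqc

end Counting

section Measurability

variable {Ω : Type*} {m : MeasurableSpace Ω} {T A : ℕ → Ω → ℝ} {N : ℝ → Ω → ℕ}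
  {S : ℝ → Ω → ℝ}

theorem measurable_count (hT : ∀ ω, StrictMono (T · ω))
    (hN : ∀ t ω, 0 ≤ t → T (N t ω) ω ≤ t ∧ t < T (N t ω + 1) ω)
    (hTm : ∀ n, Measurable (T n)) {t : ℝ} (ht : 0 ≤ t) : Measurable (N t) := by
  refine measurable_to_countable' fun n => ?_
  have : N t ⁻¹' {n} = {ω | T n ω ≤ t} \ {ω | T (n + 1) ω ≤ t} := by
    ext ω
    simp only [mem_preimage, mem_singleton_iff, mem_sdiff, mem_ofPred_eq,
      ← le_count_iff (hT ω) (hN · ω) ht]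
    omega
  rw [this]
  exact (measurableSet_le (hTm n) measurable_const).diff
    (measurableSet_le (hTm (n + 1)) measurable_const)

theorem measurable_comp_count (hT : ∀ ω, StrictMono (T · ω))
    (hN : ∀ t ω, 0 ≤ t → T (N t ω) ω ≤ t ∧ t < T (N t ω + 1) ω)
    (hS : ∀ t ω, S t ω = A (N t ω) ω) (hTm : ∀ n, Measurable (T n))
    (hAm : ∀ n, Measurable (A n)) {t : ℝ} (ht : 0 ≤ t) : Measurable (S t) := by
  rw [show S t = fun ω => A (N t ω) ω from funext (hS t)]
  exact .apply_index hAm (measurable_count hT hN hTm ht)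

theorem measurable_value_of_measurable_rat (hT : ∀ ω, StrictMono (T · ω))
    (hT0 : ∀ ω, 0 ≤ T 0 ω) (hN : ∀ t ω, 0 ≤ t → T (N t ω) ω ≤ t ∧ t < T (N t ω + 1) ω)
    (hA : ∀ ω, StrictMono (A · ω)) (hS : ∀ t ω, S t ω = A (N t ω) ω)
    (hSm : ∀ q : ℚ, 0 ≤ (q : ℝ) → Measurable (S q)) (n : ℕ) : Measurable (A n) := by
  induction n with
  | zero =>
    have hA0 : A 0 = S (0 : ℚ) := funext fun ω => by
      rw [hS, Rat.cast_zero, count_zero (hT ω) (hN · ω) (hT0 ω)]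
    exact hA0 ▸ hSm 0 Rat.cast_zero.ge
  | succ n ih =>
    refine measurable_of_Iio fun c => ?_
    have : A (n + 1) ⁻¹' Iio c =
        ⋃ (q : ℚ) (_ : 0 ≤ (q : ℝ)), {ω | A n ω < S q ω} ∩ {ω | S q ω < c} := by
      ext ω
      simp only [mem_preimage, mem_Iio, mem_iUnion, mem_inter_iff, mem_ofPred_eq, hS,
        succ_lt_iff_exists_rat_lt_comp_count (hT ω) (hN · ω) (hT0 ω) (hA ω), exists_prop]
    rw [this]
    exact .iUnion fun q => .iUnion fun hq =>
      (measurableSet_lt ih (hSm q hq)).inter (measurableSet_lt (hSm q hq) measurable_const)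

theorem measurable_time_of_measurable_rat (hT : ∀ ω, StrictMono (T · ω))
    (hT0 : ∀ ω, 0 ≤ T 0 ω) (hN : ∀ t ω, 0 ≤ t → T (N t ω) ω ≤ t ∧ t < T (N t ω + 1) ω)
    (hA : ∀ ω, StrictMono (A · ω)) (hS : ∀ t ω, S t ω = A (N t ω) ω)
    (hSm : ∀ q : ℚ, 0 ≤ (q : ℝ) → Measurable (S q)) (n : ℕ) : Measurable (T n) := by
  refine measurable_of_Iio fun c => ?_
  have : T n ⁻¹' Iio c = ⋃ (q : ℚ) (_ : 0 ≤ (q : ℝ) ∧ (q : ℝ) < c), {ω | A n ω ≤ S q ω} := by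
    ext ω
    simp only [mem_preimage, mem_Iio, mem_iUnion, mem_ofPred_eq, hS, (hA ω).le_iff_le,
      lt_iff_exists_rat_le_count (hT ω) (hN · ω) (hT0 ω), exists_prop, and_assoc]
  rw [this]
  exact .iUnion fun q => .iUnion fun hq => measurableSet_le
    (measurable_value_of_measurable_rat hT hT0 hN hA hS hSm n) (hSm q hq.1)

end Measurability

theorem stmt_4_general {Ω : Type*}
    (W X : ℕ → Ω → ℝ)
    (hWpos : ∀ n ω, 0 < W n ω) (hXpos : ∀ n ω, 0 < X n ω)
    (T : ℕ → Ω → ℝ) (hT : ∀ n ω, T n ω = ∑ k ∈ Finset.range n, W k ω)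
    (N : ℝ → Ω → ℕ)
    (hN : ∀ t ω, 0 ≤ t → T (N t ω) ω ≤ t ∧ t < T (N t ω + 1) ω)
    (S : ℝ → Ω → ℝ) (hS : ∀ t ω, S t ω = ∑ k ∈ Finset.range (N t ω), X k ω)
    (F : ℝ → MeasurableSpace Ω)
    (hF : ∀ t, F t = ⨆ u ∈ Set.Icc (0 : ℝ) t, MeasurableSpace.comap (S u) inferInstance) :
    (⨆ t ∈ Set.Ici (0 : ℝ), F t) =
      (⨆ n, MeasurableSpace.comap (W n) inferInstance) ⊔
        (⨆ n, MeasurableSpace.comap (X n) inferInstance) := by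
  set A : ℕ → Ω → ℝ := fun n ω => ∑ k ∈ Finset.range n, X k ω
  have hTmono (ω : Ω) : StrictMono (T · ω) := by
    simpa only [hT] using strictMono_sum_range_of_pos (hWpos · ω)
  have hAmono (ω : Ω) : StrictMono (A · ω) := strictMono_sum_range_of_pos (hXpos · ω)
  have hT0 (ω : Ω) : 0 ≤ T 0 ω := by simp [hT]
  apply le_antisymm
  · set mR := (⨆ n, MeasurableSpace.comap (W n) inferInstance) ⊔
      (⨆ n, MeasurableSpace.comap (X n) inferInstance)
    have hTm (n : ℕ) : Measurable[mR] (T n) := by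
      rw [funext (hT n)]
      exact Finset.measurable_sum _ fun k _ =>
        .of_comap_le (le_sup_of_le_left (le_iSup (fun k => MeasurableSpace.comap (W k) _) k))
    have hAm (n : ℕ) : Measurable[mR] (A n) := Finset.measurable_sum _ fun k _ =>
      .of_comap_le (le_sup_of_le_right (le_iSup (fun k => MeasurableSpace.comap (X k) _) k))
    exact iSup₂_le fun t _ => (hF t).symm ▸ iSup₂_le fun u hu =>
      (measurable_comp_count hTmono hN hS hTm hAm hu.1).comap_le
  · set mT := ⨆ t ∈ Set.Ici (0 : ℝ), F t
    have hSm (q : ℚ) (hq : 0 ≤ (q : ℝ)) : Measurable[mT] (S q) := .of_comap_le <|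
      (hF q ▸ le_iSup₂ (f := fun u (_ : u ∈ Icc 0 (q : ℝ)) => MeasurableSpace.comap (S u) _)
        (q : ℝ) ⟨hq, le_rfl⟩).trans (le_iSup₂ (f := fun t (_ : t ∈ Ici 0) => F t) (q : ℝ) hq)
    have hTm := measurable_time_of_measurable_rat hTmono hT0 hN hAmono hS hSm
    have hAm := measurable_value_of_measurable_rat hTmono hT0 hN hAmono hS hSm
    have hW (n : ℕ) : W n = T (n + 1) - T n := by ext ω; simp [hT, Finset.sum_range_succ]
    have hX (n : ℕ) : X n = A (n + 1) - A n := by ext ω; simp [A, Finset.sum_range_succ]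
    exact sup_le (iSup_le fun n => (hW n ▸ (hTm (n + 1)).sub (hTm n)).comap_le)
      (iSup_le fun n => (hX n ▸ (hAm (n + 1)).sub (hAm n)).comap_le)

/-- Lemma 3: the terminal σ-algebra `F_∞ = σ(⋃_{t≥0} F_t)` of the
aggregate claims process equals the σ-algebra generated by all interarrival
times and all claim sizes. -/
theorem stmt_4 {Ω : Type*} [MeasurableSpace Ω]
    (W X : ℕ → Ω → ℝ)
    (hWm : ∀ n, Measurable (W n)) (hXm : ∀ n, Measurable (X n))
    (hWpos : ∀ n ω, 0 < W n ω) (hXpos : ∀ n ω, 0 < X n ω)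
    (T : ℕ → Ω → ℝ) (hT : ∀ n ω, T n ω = ∑ k ∈ Finset.range n, W k ω)
    (hTunb : ∀ ω M, ∃ n, M < T n ω)
    (N : ℝ → Ω → ℕ)
    (hN : ∀ t ω, 0 ≤ t → T (N t ω) ω ≤ t ∧ t < T (N t ω + 1) ω)
    (S : ℝ → Ω → ℝ) (hS : ∀ t ω, S t ω = ∑ k ∈ Finset.range (N t ω), X k ω)
    (F : ℝ → MeasurableSpace Ω)
    (hF : ∀ t, F t = ⨆ u ∈ Set.Icc (0 : ℝ) t, MeasurableSpace.comap (S u) inferInstance) :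
    (⨆ t ∈ Set.Ici (0 : ℝ), F t) =
      (⨆ n, MeasurableSpace.comap (W n) inferInstance) ⊔
        (⨆ n, MeasurableSpace.comap (X n) inferInstance) :=
  stmt_4_general W X hWpos hXpos T hT N hN S hS F hF
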